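/- arXiv:2506.04487 — 2 statements merged into one kernel-verified Lean document; each statement's English description precedes it below -/
import Mathlib

section
/- Descent inequality for ⊥Grad: if ∇L is k-Lipschitz and θ' = θ - η·g with g the orthogonalized gradient at θ ≠ 0, then L(θ') ≤ L(θ) - η(1 - ηk/2)·‖g‖². -/
/-!
Along the segment from `x` to `y = x + v`, the gap
`φ t = f (x + t • v) - t ⟪∇f x, v⟫ - (k/2) t² ‖v‖²` between `f` and its quadratic model has
derivative `⟪∇f (x + t • v) - ∇f x, v⟫ - k t ‖v‖²`, which is nonpositive for `t ≥ 0` by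
Cauchy–Schwarz and the Lipschitz bound; hence `φ 1 ≤ φ 0`, the descent lemma. The orthogonalized
gradient `g` is the component of `∇L θ` orthogonal to `θ`, so `⟪∇L θ, g⟫ = ‖g‖²`, and the descent
lemma at `y = θ - η • g` gives the claim.
-/

open scoped RealInnerProductSpace

section

variable {E : Type*} [NormedAddCommGroup E] [InnerProductSpace ℝ E]

theorem inner_sub_smul_inner_div_norm_sq_self (u v : E) :
    ⟪u - (⟪u, v⟫ / ‖v‖ ^ 2) • v, v⟫ = 0 := by
  rcases eq_or_ne v 0 with rfl | hv
  · simp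
  rw [inner_sub_left, real_inner_smul_left, real_inner_self_eq_norm_sq]
  field_simp
  ring

theorem inner_self_sub_smul_inner_div_norm_sq (u v : E) :
    ⟪u, u - (⟪u, v⟫ / ‖v‖ ^ 2) • v⟫ = ‖u - (⟪u, v⟫ / ‖v‖ ^ 2) • v‖ ^ 2 := by
  set g := u - (⟪u, v⟫ / ‖v‖ ^ 2) • v
  have hu : u = g + (⟪u, v⟫ / ‖v‖ ^ 2) • v := (sub_add_cancel u _).symm
  have hvg : ⟪v, g⟫ = 0 := by rw [real_inner_comm]; exact inner_sub_smul_inner_div_norm_sq_self u v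
  conv_lhs => rw [hu]
  rw [inner_add_left, real_inner_smul_left, hvg, mul_zero, add_zero, real_inner_self_eq_norm_sq]

variable [CompleteSpace E] {f : E → ℝ}

theorem hasDerivAt_comp_add_smul {x v : E} {t : ℝ} (hf : DifferentiableAt ℝ f (x + t • v)) :
    HasDerivAt (fun s : ℝ => f (x + s • v)) ⟪gradient f (x + t • v), v⟫ t := by
  have hline : HasDerivAt (fun s : ℝ => x + s • v) v t := by
    simpa using ((hasDerivAt_id t).smul_const v).const_add x
  exact (hasGradientAt_iff_hasFDerivAt.mp hf.hasGradientAt).comp_hasDerivAt t hline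

theorem le_add_inner_gradient_add_half_mul_norm_sq {k : ℝ} (hf : Differentiable ℝ f) {x : E}
    (hLip : ∀ y, ‖gradient f y - gradient f x‖ ≤ k * ‖y - x‖) (y : E) :
    f y ≤ f x + ⟪gradient f x, y - x⟫ + k / 2 * ‖y - x‖ ^ 2 := by
  set v := y - x
  let φ : ℝ → ℝ := fun t => f (x + t • v) - t * ⟪gradient f x, v⟫ - k / 2 * t ^ 2 * ‖v‖ ^ 2
  have hφ : ∀ t, HasDerivAt φ
      (⟪gradient f (x + t • v), v⟫ - ⟪gradient f x, v⟫ - k * t * ‖v‖ ^ 2) t := by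
    intro t
    have := (((hasDerivAt_comp_add_smul (x := x) (v := v) (hf _)).sub
      ((hasDerivAt_id t).mul_const ⟪gradient f x, v⟫)).sub
      (((hasDerivAt_pow 2 t).const_mul (k / 2)).mul_const (‖v‖ ^ 2)))
    exact this.congr_deriv (by ring)
  have hφ' : ∀ t ∈ interior (Set.Ici (0 : ℝ)),
      ⟪gradient f (x + t • v), v⟫ - ⟪gradient f x, v⟫ - k * t * ‖v‖ ^ 2 ≤ 0 := by
    intro t ht
    rw [interior_Ici, Set.mem_Ioi] at ht
    rw [sub_nonpos]
    have hlip := hLip (x + t • v)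
    rw [add_sub_cancel_left, norm_smul, Real.norm_of_nonneg ht.le] at hlip
    calc ⟪gradient f (x + t • v), v⟫ - ⟪gradient f x, v⟫
        = ⟪gradient f (x + t • v) - gradient f x, v⟫ := (inner_sub_left _ _ _).symm
      _ ≤ ‖gradient f (x + t • v) - gradient f x‖ * ‖v‖ := real_inner_le_norm _ _
      _ ≤ k * (t * ‖v‖) * ‖v‖ := by gcongr
      _ = k * t * ‖v‖ ^ 2 := by ring
  have hanti : AntitoneOn φ (Set.Ici 0) :=
    antitoneOn_of_hasDerivWithinAt_nonpos (convex_Ici 0)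
      (fun t _ => (hφ t).continuousAt.continuousWithinAt)
      (fun t _ => (hφ t).hasDerivWithinAt) hφ'
  have h01 := hanti Set.self_mem_Ici (Set.mem_Ici.mpr zero_le_one) zero_le_one
  simp only [φ, one_smul, zero_smul, add_zero, add_sub_cancel, v] at h01
  linarith

end

theorem orthograd_descent_inequality_general (p : ℕ) (L : EuclideanSpace ℝ (Fin p) → ℝ)
    (hL : Differentiable ℝ L) (k : ℝ)
    (hLip : ∀ x y : EuclideanSpace ℝ (Fin p),
      ‖gradient L x - gradient L y‖ ≤ k * ‖x - y‖)
    (η : ℝ) (θ : EuclideanSpace ℝ (Fin p))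
    (g θ' : EuclideanSpace ℝ (Fin p))
    (hg : g = gradient L θ - (⟪gradient L θ, θ⟫ / ‖θ‖ ^ 2) • θ)
    (hθ' : θ' = θ - η • g) :
    L θ' ≤ L θ - η * (1 - η * k / 2) * ‖g‖ ^ 2 := by
  have hgrad_g : ⟪gradient L θ, g⟫ = ‖g‖ ^ 2 := hg ▸ inner_self_sub_smul_inner_div_norm_sq _ _
  have hdescent := le_add_inner_gradient_add_half_mul_norm_sq hL (fun y => hLip y θ) θ'
  subst hθ'
  rw [sub_sub_cancel_left, inner_neg_right, real_inner_smul_right, hgrad_g, norm_neg, norm_smul,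
    mul_pow, Real.norm_eq_abs, sq_abs] at hdescent
  linear_combination hdescent

theorem orthograd_descent_inequality (p : ℕ) (L : EuclideanSpace ℝ (Fin p) → ℝ)
    (hL : Differentiable ℝ L) (k : ℝ) (hk : 0 ≤ k)
    (hLip : ∀ x y : EuclideanSpace ℝ (Fin p),
      ‖gradient L x - gradient L y‖ ≤ k * ‖x - y‖)
    (η : ℝ) (hη : 0 < η) (θ : EuclideanSpace ℝ (Fin p)) (hθ : θ ≠ 0)
    (g θ' : EuclideanSpace ℝ (Fin p))
    (hg : g = gradient L θ - (⟪gradient L θ, θ⟫ / ‖θ‖ ^ 2) • θ)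
    (hθ' : θ' = θ - η • g) :
    L θ' ≤ L θ - η * (1 - η * k / 2) * ‖g‖ ^ 2 :=
  orthograd_descent_inequality_general p L hL k hLip η θ g θ' hg hθ'
end

section
/- If L is bounded below, ∇L is k-Lipschitz, and 0 < η < 1/k, then along the non-renormalized ⊥Grad trajectory θ_{n+1} = θ_n - η·g_n the series ∑ₙ ‖g_n‖² converges, and it is bounded by (L(θ₀) - inf L) / (η(1 - kη/2)). -/
/-!
Since `g_n` is `∇L(θ_n)` minus its orthogonal projection onto `ℝ θ_n`, it is orthogonal to that
projection, so `⟪∇L(θ_n), g_n⟫ = ‖g_n‖²`: to first order the step `-η g_n` decreases `L` by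
`η‖g_n‖²`, as a plain gradient step would. The descent lemma for a `k`-Lipschitz gradient then
gives `L(θ_{n+1}) ≤ L(θ_n) - η(1 - kη/2)‖g_n‖²`, and telescoping against `inf L` bounds the
partial sums of `‖g_n‖²`.
-/

open scoped RealInnerProductSpace

variable {E : Type*} [NormedAddCommGroup E] [InnerProductSpace ℝ E]

theorem Submodule.inner_sub_starProjection_right_eq_norm_sq (K : Submodule ℝ E)
    [K.HasOrthogonalProjection] (w : E) :
    ⟪w, w - K.starProjection w⟫ = ‖w - K.starProjection w‖ ^ 2 := by
  rw [← real_inner_self_eq_norm_sq, real_inner_comm, inner_sub_right _ w,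
    K.starProjection_inner_eq_zero w _ (K.starProjection_apply_mem w), sub_zero]

theorem inner_sub_proj_singleton_eq_norm_sq (w v : E) :
    ⟪w, w - (⟪w, v⟫ / ‖v‖ ^ 2) • v⟫ = ‖w - (⟪w, v⟫ / ‖v‖ ^ 2) • v‖ ^ 2 := by
  have := (ℝ ∙ v).inner_sub_starProjection_right_eq_norm_sq w
  rwa [Submodule.starProjection_singleton, real_inner_comm w v, RCLike.ofReal_real_eq_id, id]
    at this

section Descent

variable [CompleteSpace E] {f : E → ℝ} {k : ℝ}

theorem le_add_inner_gradient_add_sq_of_lipschitz (hf : Differentiable ℝ f)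
    (hLip : ∀ x y, ‖gradient f x - gradient f y‖ ≤ k * ‖x - y‖) (x v : E) :
    f (x + v) ≤ f x + ⟪gradient f x, v⟫ + k / 2 * ‖v‖ ^ 2 := by
  have hφ (t : ℝ) : HasDerivAt (fun t : ℝ => f (x + t • v)) ⟪gradient f (x + t • v), v⟫ t := by
    have hline : HasDerivAt (fun t : ℝ => x + t • v) v t := by
      simpa using ((hasDerivAt_id t).smul_const v).const_add x
    exact (hf _).hasGradientAt.hasFDerivAt.comp_hasDerivAt t hline
  have hB (t : ℝ) : HasDerivAt (fun t : ℝ => f x + t * ⟪gradient f x, v⟫ + k / 2 * t ^ 2 * ‖v‖ ^ 2)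
      (⟪gradient f x, v⟫ + k * t * ‖v‖ ^ 2) t := by
    refine ((((hasDerivAt_id t).mul_const _).const_add (f x)).add
      (((hasDerivAt_pow 2 t).const_mul (k / 2)).mul_const (‖v‖ ^ 2))).congr_deriv ?_
    simp only [one_mul]
    ring
  have hbound {t : ℝ} (ht : 0 ≤ t) :
      ⟪gradient f (x + t • v), v⟫ ≤ ⟪gradient f x, v⟫ + k * t * ‖v‖ ^ 2 := by
    have hLipt : ‖gradient f (x + t • v) - gradient f x‖ ≤ k * t * ‖v‖ := by
      simpa [norm_smul, abs_of_nonneg ht, mul_assoc] using hLip (x + t • v) x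
    have := real_inner_le_norm (gradient f (x + t • v) - gradient f x) v
    rw [inner_sub_left] at this
    nlinarith [mul_le_mul_of_nonneg_right hLipt (norm_nonneg v)]
  have := image_le_of_deriv_right_le_deriv_boundary (a := 0) (b := 1)
    (fun t _ => (hφ t).continuousAt.continuousWithinAt) (fun t _ => (hφ t).hasDerivWithinAt)
    (by simp) (fun t _ => (hB t).continuousAt.continuousWithinAt)
    (fun t _ => (hB t).hasDerivWithinAt) (fun t ht => hbound ht.1)
    (Set.right_mem_Icc.2 zero_le_one)
  simpa using this

theorem le_sub_of_inner_gradient_eq_norm_sq (hf : Differentiable ℝ f)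
    (hLip : ∀ x y, ‖gradient f x - gradient f y‖ ≤ k * ‖x - y‖) {x d : E}
    (hd : ⟪gradient f x, d⟫ = ‖d‖ ^ 2) {η : ℝ} (hη : 0 ≤ η) :
    f (x - η • d) ≤ f x - η * (1 - k * η / 2) * ‖d‖ ^ 2 := by
  have h := le_add_inner_gradient_add_sq_of_lipschitz hf hLip x (-(η • d))
  rw [← sub_eq_add_neg, inner_neg_right, real_inner_smul_right, hd, norm_neg, norm_smul,
    Real.norm_eq_abs, abs_of_nonneg hη] at h
  linarith

end Descent

theorem summable_and_tsum_le_of_sufficient_decrease {a b : ℕ → ℝ} {m c : ℝ} (hc : 0 < c)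
    (hb : ∀ n, 0 ≤ b n) (ha : ∀ n, m ≤ a n) (hdec : ∀ n, a (n + 1) ≤ a n - c * b n) :
    Summable b ∧ ∑' n, b n ≤ (a 0 - m) / c := by
  have htele : ∀ N, c * ∑ i ∈ Finset.range N, b i ≤ a 0 - a N := by
    intro N
    induction N with
    | zero => simp
    | succ N ih => rw [Finset.sum_range_succ, mul_add]; linarith [hdec N]
  have hpartial : ∀ N, ∑ i ∈ Finset.range N, b i ≤ (a 0 - m) / c := fun N => by
    rw [le_div_iff₀' hc]; linarith [htele N, ha N]
  exact ⟨summable_of_sum_range_le hb hpartial, Real.tsum_le_of_sum_range_le hb hpartial⟩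

theorem orthograd_gradient_square_summable_general (p : ℕ) (L : EuclideanSpace ℝ (Fin p) → ℝ)
    (hL : Differentiable ℝ L) (Linf : ℝ) (hbd : ∀ x, Linf ≤ L x)
    (k : ℝ)
    (hLip : ∀ x y : EuclideanSpace ℝ (Fin p),
      ‖gradient L x - gradient L y‖ ≤ k * ‖x - y‖)
    (η : ℝ) (hη : 0 < η) (hηk : η < 1 / k)
    (θ g : ℕ → EuclideanSpace ℝ (Fin p))
    (hg0 : ∀ n, θ n = 0 → g n = 0)
    (hg : ∀ n, θ n ≠ 0 →
      g n = gradient L (θ n) - (⟪gradient L (θ n), θ n⟫ / ‖θ n‖ ^ 2) • θ n)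
    (hrec : ∀ n, θ (n + 1) = θ n - η • g n) :
    Summable (fun n => ‖g n‖ ^ 2) ∧
      ∑' n, ‖g n‖ ^ 2 ≤ (L (θ 0) - Linf) / (η * (1 - k * η / 2)) := by
  have hk : 0 < k := by
    by_contra! hk
    linarith [one_div_nonpos.2 hk]
  have hkη : k * η < 1 := by rwa [lt_div_iff₀' hk] at hηk
  have hinner : ∀ n, ⟪gradient L (θ n), g n⟫ = ‖g n‖ ^ 2 := fun n => by
    by_cases hθ : θ n = 0
    · simp [hg0 n hθ]
    · rw [hg n hθ]; exact inner_sub_proj_singleton_eq_norm_sq _ _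
  refine summable_and_tsum_le_of_sufficient_decrease (by nlinarith) (fun n => sq_nonneg _)
    (fun n => hbd (θ n)) fun n => ?_
  rw [hrec n]
  exact le_sub_of_inner_gradient_eq_norm_sq hL hLip (hinner n) hη.le

theorem orthograd_gradient_square_summable (p : ℕ) (L : EuclideanSpace ℝ (Fin p) → ℝ)
    (hL : Differentiable ℝ L) (Linf : ℝ) (hbd : ∀ x, Linf ≤ L x)
    (k : ℝ) (hk : 0 < k)
    (hLip : ∀ x y : EuclideanSpace ℝ (Fin p),
      ‖gradient L x - gradient L y‖ ≤ k * ‖x - y‖)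
    (η : ℝ) (hη : 0 < η) (hηk : η < 1 / k)
    (θ g : ℕ → EuclideanSpace ℝ (Fin p))
    (hg0 : ∀ n, θ n = 0 → g n = 0)
    (hg : ∀ n, θ n ≠ 0 →
      g n = gradient L (θ n) - (⟪gradient L (θ n), θ n⟫ / ‖θ n‖ ^ 2) • θ n)
    (hrec : ∀ n, θ (n + 1) = θ n - η • g n) :
    Summable (fun n => ‖g n‖ ^ 2) ∧
      ∑' n, ‖g n‖ ^ 2 ≤ (L (θ 0) - Linf) / (η * (1 - k * η / 2)) :=
  orthograd_gradient_square_summable_general p L hL Linf hbd k hLip η hη hηk θ g hg0 hg hrec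
end
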